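/- arXiv:1905.03673 — 2 statements merged into one kernel-verified Lean document; each statement's English description precedes it below -/
import Mathlib

section
/- Let $b : \mathbb{R}^d \to \mathbb{R}^d$ be continuous with potential $\log p$ (i.e. $b = \nabla \log p$ for a smooth function $\log p$). Suppose there exist $R, \kappa > 0$ with $\langle b(x) - b(y), x - y\rangle \le -\frac{\kappa}{2}\|x-y\|_2^2$ whenever $\|x - y\|_2 \ge R$. Then there exists a constant $c_0$ such that for all $\|x\|_2 \ge R$: $\log p(x) - \log p(0) \le (\|b(0)\|_2 + c_0)\|x\|_2 - \frac{\kappa}{4}\left(1 - \frac{R^2}{\|x\|_2^2}\right)\|x\|_2^2$. -/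
open RealInnerProductSpace

set_option maxHeartbeats 1000000 in
theorem stmt14 {d : ℕ} (f : EuclideanSpace ℝ (Fin d) → ℝ) (hf : ContDiff ℝ (⊤ : ℕ∞) f)
    (b : EuclideanSpace ℝ (Fin d) → EuclideanSpace ℝ (Fin d))
    (hb : b = fun x => gradient f x) (hbc : Continuous b)
    (R κ : ℝ) (hR : 0 < R) (hκ : 0 < κ)
    (hdiss : ∀ x y, R ≤ ‖x - y‖ → ⟪b x - b y, x - y⟫ ≤ -(κ / 2) * ‖x - y‖ ^ 2) :
    ∃ c₀ : ℝ, ∀ x, R ≤ ‖x‖ →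
      f x - f 0 ≤ (‖b 0‖ + c₀) * ‖x‖ - κ / 4 * (1 - R ^ 2 / ‖x‖ ^ 2) * ‖x‖ ^ 2 := by
  obtain ⟨z₀, -, hz₀⟩ := (isCompact_closedBall (0 : EuclideanSpace ℝ (Fin d)) R).exists_isMaxOn
    ⟨0, by simp [hR.le]⟩ (f := fun z => ‖b z - b 0‖) ((hbc.sub continuous_const).norm.continuousOn)
  set M := ‖b z₀ - b 0‖ with hM
  have hM0 : 0 ≤ M := norm_nonneg _
  refine ⟨M, fun x hx => ?_⟩
  have hxpos : 0 < ‖x‖ := lt_of_lt_of_le hR hx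
  set r : ℝ := R / ‖x‖ with hr
  have hr0 : 0 < r := div_pos hR hxpos
  have hr1 : r ≤ 1 := (div_le_one hxpos).2 hx
  have hrx : r * ‖x‖ = R := div_mul_cancel₀ _ hxpos.ne'
  -- derivative along the segment
  have hderiv : ∀ t : ℝ, HasDerivAt (fun s : ℝ => f (s • x)) ⟪b (t • x), x⟫ t := by
    intro t
    have h1 : HasDerivAt (fun s : ℝ => s • x) x t := by
      simpa using (hasDerivAt_id t).smul_const x
    have h2 : HasGradientAt f (gradient f (t • x)) (t • x) :=
      ((hf.differentiable (by simp)) (t • x)).hasGradientAt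
    have h3 := h2.hasFDerivAt.comp_hasDerivAt t h1
    simp [hb, InnerProductSpace.toDual_apply_apply] at h3 ⊢
    exact h3
  have hcont : Continuous fun t : ℝ => ⟪b (t • x), x⟫ :=
    (hbc.comp (continuous_id.smul continuous_const)).inner continuous_const
  have hint : ∀ a c : ℝ, IntervalIntegrable (fun t : ℝ => ⟪b (t • x), x⟫)
      MeasureTheory.volume a c := fun a c => hcont.intervalIntegrable a c
  have hFTC : f x - f 0 = ∫ t in (0:ℝ)..1, ⟪b (t • x), x⟫ := by
    have := intervalIntegral.integral_eq_sub_of_hasDerivAt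
      (f := fun s : ℝ => f (s • x)) (a := (0:ℝ)) (b := 1)
      (fun t _ => hderiv t) (hint 0 1)
    simpa using this.symm
  have hsplit : (∫ t in (0:ℝ)..1, ⟪b (t • x), x⟫)
      = (∫ t in (0:ℝ)..r, ⟪b (t • x), x⟫) + ∫ t in r..1, ⟪b (t • x), x⟫ :=
    (intervalIntegral.integral_add_adjacent_intervals (hint 0 r) (hint r 1)).symm
  -- bound on [0, r]
  have hbd1 : (∫ t in (0:ℝ)..r, ⟪b (t • x), x⟫) ≤ (‖b 0‖ + M) * (r * ‖x‖) := by
    have hmono : (∫ t in (0:ℝ)..r, ⟪b (t • x), x⟫)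
        ≤ ∫ _t in (0:ℝ)..r, (‖b 0‖ + M) * ‖x‖ := by
      apply intervalIntegral.integral_mono_on hr0.le (hint 0 r)
        (intervalIntegrable_const)
      intro t ht
      have htr : t • x ∈ Metric.closedBall (0 : EuclideanSpace ℝ (Fin d)) R := by
        simp only [Metric.mem_closedBall, dist_zero_right, norm_smul, Real.norm_eq_abs,
          abs_of_nonneg ht.1]
        calc t * ‖x‖ ≤ r * ‖x‖ := by nlinarith [ht.2]
          _ = R := hrx
      have h1 : ⟪b (t • x) - b 0, x⟫ ≤ M * ‖x‖ :=
        (real_inner_le_norm _ _).trans (by nlinarith [isMaxOn_iff.1 hz₀ _ htr, norm_nonneg x])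
      have h2 : ⟪b 0, x⟫ ≤ ‖b 0‖ * ‖x‖ := real_inner_le_norm _ _
      have := inner_sub_left (𝕜 := ℝ) (b (t • x)) (b 0) x
      nlinarith [this]
    simpa using hmono
  -- bound on [r, 1]
  have hbd2 : (∫ t in r..1, ⟪b (t • x), x⟫)
      ≤ (1 - r) * (‖b 0‖ * ‖x‖) - κ / 2 * ‖x‖ ^ 2 * ((1 - r ^ 2) / 2) := by
    have hmono : (∫ t in r..1, ⟪b (t • x), x⟫)
        ≤ ∫ t in r..1, (‖b 0‖ * ‖x‖ - κ / 2 * ‖x‖ ^ 2 * t) := by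
      apply intervalIntegral.integral_mono_on hr1 (hint r 1)
        ((continuous_const.sub (continuous_const.mul continuous_id')).intervalIntegrable r 1)
      intro t ht
      have htpos : 0 < t := lt_of_lt_of_le hr0 ht.1
      have hnorm : R ≤ ‖t • x - 0‖ := by
        rw [sub_zero, norm_smul, Real.norm_eq_abs, abs_of_pos htpos, ← hrx]
        nlinarith [ht.1]
      have hd := hdiss (t • x) 0 hnorm
      rw [sub_zero] at hd
      have hexp : ⟪b (t • x) - b 0, t • x⟫ = t * ⟪b (t • x) - b 0, x⟫ := by
        rw [real_inner_smul_right]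
      rw [hexp, norm_smul, Real.norm_eq_abs, abs_of_pos htpos] at hd
      have h1 : ⟪b (t • x) - b 0, x⟫ ≤ -(κ / 2) * (t * ‖x‖ ^ 2) := by
        have := mul_pos htpos htpos
        nlinarith [hd]
      have h2 : ⟪b 0, x⟫ ≤ ‖b 0‖ * ‖x‖ := real_inner_le_norm _ _
      have h3 := inner_sub_left (𝕜 := ℝ) (b (t • x)) (b 0) x
      show ⟪b (t • x), x⟫ ≤ ‖b 0‖ * ‖x‖ - κ / 2 * ‖x‖ ^ 2 * t
      nlinarith
    have hcomp : (∫ t in r..1, (‖b 0‖ * ‖x‖ - κ / 2 * ‖x‖ ^ 2 * t))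
        = (1 - r) * (‖b 0‖ * ‖x‖) - κ / 2 * ‖x‖ ^ 2 * ((1 - r ^ 2) / 2) := by
      rw [intervalIntegral.integral_sub (g := fun t : ℝ => κ / 2 * ‖x‖ ^ 2 * t) intervalIntegrable_const
        ((continuous_const.mul continuous_id').intervalIntegrable r 1),
        intervalIntegral.integral_const, intervalIntegral.integral_const_mul,
        integral_id, smul_eq_mul]
      ring
    rw [hcomp] at hmono
    exact hmono
  have hr2 : (1 : ℝ) - R ^ 2 / ‖x‖ ^ 2 = 1 - r ^ 2 := by
    rw [hr, div_pow]
  rw [hFTC, hsplit, hr2]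
  have hMR : r * M * ‖x‖ = M * R := by rw [mul_comm r M, mul_assoc, hrx]
  nlinarith [hbd1, hbd2, mul_le_mul_of_nonneg_left hx hM0, hxpos]
end

section
/- If $P$ is a probability measure on $\mathbb{R}^d$ with smooth positive density $p$ and continuous score function $b = \nabla\log p$ satisfying distant dissipativity ($\langle b(x)-b(y), x-y\rangle \le -\frac{\kappa}{2}\|x-y\|_2^2$ for $\|x-y\|_2 \ge R$, some $R,\kappa > 0$), then $P$ is sub-Gaussian: there exists $a > 0$ with $\mathbb{E}_{X\sim P}[e^{a\|X\|_2^2}] < \infty$. -/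
open MeasureTheory RealInnerProductSpace

lemma gauss_int_aux {d : ℕ} {c : ℝ} (hc : 0 < c) :
    Integrable (fun v : EuclideanSpace ℝ (Fin d) => Real.exp (-c * ‖v‖ ^ 2)) volume := by
  have h := (GaussianFourier.integrable_cexp_neg_mul_sq_norm_add
      (b := (c : ℂ)) (by simpa using hc) 0 (0 : EuclideanSpace ℝ (Fin d))).norm
  refine h.congr (Filter.Eventually.of_forall fun v => ?_)
  simp [Complex.norm_exp]
  left
  norm_cast

theorem stmt15 {d : ℕ} (p : EuclideanSpace ℝ (Fin d) → ℝ) (hp : ∀ x, 0 < p x)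
    (hsmooth : ContDiff ℝ (⊤ : ℕ∞) p)
    (P : Measure (EuclideanSpace ℝ (Fin d))) [IsProbabilityMeasure P]
    (hP : P = volume.withDensity (fun x => ENNReal.ofReal (p x)))
    (b : EuclideanSpace ℝ (Fin d) → EuclideanSpace ℝ (Fin d))
    (hb : b = fun x => gradient (fun y => Real.log (p y)) x)
    (R κ : ℝ) (hR : 0 < R) (hκ : 0 < κ)
    (hdiss : ∀ x y, R ≤ ‖x - y‖ → ⟪b x - b y, x - y⟫ ≤ -(κ / 2) * ‖x - y‖ ^ 2) :
    ∃ a : ℝ, 0 < a ∧ Integrable (fun x => Real.exp (a * ‖x‖ ^ 2)) P := by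
  have hpc : Continuous p := hsmooth.continuous
  have hlogc : Continuous (fun y : EuclideanSpace ℝ (Fin d) => Real.log (p y)) :=
    hpc.log fun y => (hp y).ne'
  set B : ℝ := ‖b 0‖ with hB
  -- derivative of t ↦ log p (t • x)
  have hderiv : ∀ (x : EuclideanSpace ℝ (Fin d)) (t : ℝ),
      HasDerivAt (fun s : ℝ => Real.log (p (s • x))) ⟪b (t • x), x⟫ t := by
    intro x t
    have hdl : DifferentiableAt ℝ (fun y => Real.log (p y)) (t • x) :=
      ((Real.differentiableAt_log (ne_of_gt (hp _))).comp _
        ((hsmooth.differentiable (by simp)) _))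
    have h1 : HasGradientAt (fun y => Real.log (p y)) (b (t • x)) (t • x) := by
      rw [hb]; exact hdl.hasGradientAt
    have h3 : HasDerivAt (fun s : ℝ => s • x) x t := by
      simpa using (hasDerivAt_id t).smul_const x
    refine (h1.hasFDerivAt.comp_hasDerivAt t h3).congr_deriv ?_
    simp [InnerProductSpace.toDual_apply_apply]
  -- inner product bound
  have hkey : ∀ (x : EuclideanSpace ℝ (Fin d)) (t : ℝ), 0 < t → R ≤ t * ‖x‖ →
      ⟪b (t • x), x⟫ ≤ B * ‖x‖ - κ / 2 * (t * ‖x‖ ^ 2) := by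
    intro x t ht hRt
    have hnorm : ‖t • x - 0‖ = t * ‖x‖ := by
      rw [sub_zero, norm_smul, Real.norm_eq_abs, abs_of_pos ht]
    have hd := hdiss (t • x) 0 (by rw [hnorm]; exact hRt)
    rw [sub_zero] at hd
    have hexp : ⟪b (t • x) - b 0, t • x⟫ = t * ⟪b (t • x), x⟫ - t * ⟪b 0, x⟫ := by
      rw [inner_sub_left, real_inner_smul_right, real_inner_smul_right]
    have hns : ‖t • x‖ = t * ‖x‖ := by rw [norm_smul, Real.norm_eq_abs, abs_of_pos ht]
    rw [hexp, hns] at hd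
    have h2 : ⟪b 0, x⟫ ≤ B * ‖x‖ := real_inner_le_norm _ _
    have h3 : t * ⟪b (t • x), x⟫ ≤ t * (⟪b 0, x⟫ - κ / 2 * (t * ‖x‖ ^ 2)) := by
      nlinarith [hd]
    have h4 := le_of_mul_le_mul_left h3 ht
    linarith
  -- max of log p on the closed ball of radius R
  obtain ⟨z, -, hz⟩ := (isCompact_closedBall (0 : EuclideanSpace ℝ (Fin d)) R).exists_isMaxOn
    ⟨0, Metric.mem_closedBall_self hR.le⟩ hlogc.continuousOn
  set M : ℝ := Real.log (p z) with hM
  -- log p bound for ‖x‖ ≥ R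
  have hlog_bound : ∀ x : EuclideanSpace ℝ (Fin d), R ≤ ‖x‖ →
      Real.log (p x) ≤ M + B * ‖x‖ - κ / 4 * ‖x‖ ^ 2 + κ / 4 * R ^ 2 := by
    intro x hx
    have hxpos : 0 < ‖x‖ := lt_of_lt_of_le hR hx
    set t0 : ℝ := R / ‖x‖ with ht0
    have ht0pos : 0 < t0 := div_pos hR hxpos
    have ht0le : t0 ≤ 1 := (div_le_one hxpos).2 hx
    have ht0n : t0 * ‖x‖ = R := div_mul_cancel₀ R hxpos.ne'
    -- the comparison function
    set F : ℝ → ℝ := fun t => B * ‖x‖ * t - κ / 4 * ‖x‖ ^ 2 * t ^ 2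
      - Real.log (p (t • x)) with hF
    have hFderiv : ∀ t : ℝ, HasDerivAt F
        (B * ‖x‖ - κ / 2 * ‖x‖ ^ 2 * t - ⟪b (t • x), x⟫) t := by
      intro t
      have h1 : HasDerivAt (fun t : ℝ => B * ‖x‖ * t - κ / 4 * ‖x‖ ^ 2 * t ^ 2)
          (B * ‖x‖ - κ / 2 * ‖x‖ ^ 2 * t) t := by
        have ha := ((hasDerivAt_id t).const_mul (B * ‖x‖)).sub
          ((hasDerivAt_pow 2 t).const_mul (κ / 4 * ‖x‖ ^ 2))
        exact ha.congr_deriv (by ring)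
      exact h1.sub (hderiv x t)
    have hmono : MonotoneOn F (Set.Icc t0 1) := by
      apply monotoneOn_of_deriv_nonneg (convex_Icc t0 1)
        (fun t _ => (hFderiv t).continuousAt.continuousWithinAt)
        (fun t _ => ((hFderiv t).differentiableAt).differentiableWithinAt)
      intro t ht
      rw [interior_Icc] at ht
      rw [(hFderiv t).deriv]
      have htpos : 0 < t := lt_trans ht0pos ht.1
      have hRt : R ≤ t * ‖x‖ := by
        rw [← ht0n]
        exact mul_le_mul_of_nonneg_right ht.1.le hxpos.le
      have := hkey x t htpos hRt
      nlinarith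
    have hle := hmono (Set.mem_Icc.2 ⟨le_refl t0, ht0le⟩)
      (Set.mem_Icc.2 ⟨ht0le, le_refl 1⟩) ht0le
    have hFt0 : F t0 = B * R - κ / 4 * R ^ 2 - Real.log (p (t0 • x)) := by
      simp only [hF]
      have ha : B * ‖x‖ * t0 = B * R := by rw [← ht0n]; ring
      have hc : κ / 4 * ‖x‖ ^ 2 * t0 ^ 2 = κ / 4 * R ^ 2 := by rw [← ht0n]; ring
      rw [ha, hc]
    have hF1 : F 1 = B * ‖x‖ - κ / 4 * ‖x‖ ^ 2 - Real.log (p x) := by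
      simp [hF]
    have hpz : Real.log (p (t0 • x)) ≤ M := by
      apply hz
      rw [Metric.mem_closedBall, dist_zero_right, norm_smul, Real.norm_eq_abs,
        abs_of_pos ht0pos, ht0n]
    have hBR : 0 ≤ B * R := mul_nonneg (norm_nonneg _) hR.le
    rw [hFt0, hF1] at hle
    linarith
  -- max of the exp-weighted density on the closed ball
  have hgc : Continuous (fun y : EuclideanSpace ℝ (Fin d) =>
      Real.exp (κ / 8 * ‖y‖ ^ 2 + Real.log (p y))) :=
    Real.continuous_exp.comp ((continuous_const.mul (continuous_norm.pow 2)).add hlogc)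
  obtain ⟨w, -, hw⟩ := (isCompact_closedBall (0 : EuclideanSpace ℝ (Fin d)) R).exists_isMaxOn
    ⟨0, Metric.mem_closedBall_self hR.le⟩ hgc.continuousOn
  set C : ℝ := max (Real.exp (M + κ / 4 * R ^ 2 + 2 * B ^ 2 / κ))
    (Real.exp (κ / 8 * ‖w‖ ^ 2 + Real.log (p w))) with hC
  have hCbound : ∀ x : EuclideanSpace ℝ (Fin d), Real.exp (κ / 8 * ‖x‖ ^ 2 + Real.log (p x)) ≤ C := by
    intro x
    rcases le_or_gt ‖x‖ R with hxR | hxR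
    · refine le_trans (hw ?_) (le_max_right _ _)
      rw [Metric.mem_closedBall, dist_zero_right]; exact hxR
    · refine le_trans ?_ (le_max_left _ _)
      apply Real.exp_le_exp.2
      have h1 := hlog_bound x hxR.le
      have h2 : B * ‖x‖ - κ / 8 * ‖x‖ ^ 2 ≤ 2 * B ^ 2 / κ := by
        rw [le_div_iff₀ hκ]
        nlinarith [sq_nonneg (κ * ‖x‖ - 4 * B)]
      linarith
  refine ⟨κ / 16, by positivity, ?_⟩
  rw [hP, integrable_withDensity_iff (by fun_prop) (Filter.Eventually.of_forall
    fun x => ENNReal.ofReal_lt_top)]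
  have heq : (fun x : EuclideanSpace ℝ (Fin d) => Real.exp (κ / 16 * ‖x‖ ^ 2) * (ENNReal.ofReal (p x)).toReal)
      = fun x : EuclideanSpace ℝ (Fin d) => Real.exp (κ / 16 * ‖x‖ ^ 2) * p x :=
    funext fun x => by rw [ENNReal.toReal_ofReal (hp x).le]
  rw [heq]
  apply Integrable.mono' ((gauss_int_aux (c := κ / 16) (by positivity)).const_mul C)
    (((Real.continuous_exp.comp (by fun_prop)).mul hpc).aestronglyMeasurable)
  refine Filter.Eventually.of_forall fun x => ?_
  simp only [Pi.mul_apply, Function.comp_apply]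
  have hprod : Real.exp (κ / 16 * ‖x‖ ^ 2) * p x
      = Real.exp (κ / 8 * ‖x‖ ^ 2 + Real.log (p x)) * Real.exp (-(κ / 16) * ‖x‖ ^ 2) := by
    rw [← Real.exp_add]
    have : κ / 8 * ‖x‖ ^ 2 + Real.log (p x) + -(κ / 16) * ‖x‖ ^ 2
        = κ / 16 * ‖x‖ ^ 2 + Real.log (p x) := by ring
    rw [this, Real.exp_add, Real.exp_log (hp x)]
  rw [Real.norm_eq_abs, abs_of_nonneg (mul_nonneg (Real.exp_pos _).le (hp x).le), hprod]
  exact mul_le_mul_of_nonneg_right (hCbound x) (Real.exp_pos _).le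
end
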